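/- arXiv:2010.10914 — 7 statements merged into one kernel-verified Lean document; each statement's English description precedes it below -/
import Mathlib

section
/- Under Assumption 2.2, the mesh step sizes of the mesh generated by ψ are nondecreasing in the layer region: h_i ≤ h_{i+1} for every integer i with 0 ≤ i ≤ N/4 − 3, i.e. h₀ ≤ h₁ ≤ ⋯ ≤ h_{N/4−2}. -/
/-- The Bakhvalov-type mesh generating function of Roos (2006). -/
noncomputable def psi (β σ ε : ℝ) (t : ℝ) : ℝ :=
  if t ≤ 1/4 then -(σ * ε / β) * Real.log (1 - 4 * (1 - ε) * t)
  else if t < 3/4 then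
    (2 * (1 + (σ * ε / β) * Real.log ε)) * (t - 1/4)
      + ((2 * σ * ε / β) * Real.log ε) * (t - 3/4)
  else 1 + (σ * ε / β) * Real.log (1 - 4 * (1 - ε) * (1 - t))

/-- Mesh points `x_i = ψ(i/N)`. -/
noncomputable def meshX (β σ ε : ℝ) (N i : ℕ) : ℝ := psi β σ ε ((i : ℝ) / (N : ℝ))

/-- Mesh step sizes `h_i = x_{i+1} - x_i`. -/
noncomputable def meshH (β σ ε : ℝ) (N i : ℕ) : ℝ :=
  meshX β σ ε N (i + 1) - meshX β σ ε N i

set_option maxHeartbeats 1000000 in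
theorem stmt_2 (β σ ε : ℝ) (N : ℕ)
    (hβ : 0 < β) (hσ : 0 < σ) (hε0 : 0 < ε) (hε1 : ε < 1)
    (hN4 : 4 ∣ N) (hN : max 8 (2 * Real.log (σ / β)) ≤ (N : ℝ))
    (hεN : ε ≤ min (β / (4 * σ)) 1 * (N : ℝ)⁻¹) :
    ∀ i : ℕ, i + 3 ≤ N / 4 → meshH β σ ε N i ≤ meshH β σ ε N (i + 1) := by
  intro i hi
  have hmul : N / 4 * 4 = N := Nat.div_mul_cancel hN4
  have h4 : 4 * (i + 3) ≤ N := by omega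
  have hN8 : (8:ℝ) ≤ (N:ℝ) := le_trans (le_max_left _ _) hN
  have hNpos : (0:ℝ) < N := by linarith
  have h4R : 4 * ((i:ℝ) + 3) ≤ (N:ℝ) := by exact_mod_cast h4
  have hc : 0 < σ * ε / β := by positivity
  set c := σ * ε / β with hcdef
  clear_value c
  have hpsi : ∀ t : ℝ, t ≤ 1/4 →
      psi β σ ε t = -c * Real.log (1 - 4 * (1 - ε) * t) := by
    intro t ht
    unfold psi
    rw [if_pos ht, hcdef]
  set A := 1 - 4 * (1 - ε) * ((i:ℝ)/(N:ℝ)) with hA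
  set B := 1 - 4 * (1 - ε) * (((i:ℝ)+1)/(N:ℝ)) with hB
  set C := 1 - 4 * (1 - ε) * (((i:ℝ)+2)/(N:ℝ)) with hC
  clear_value A B C
  have ht0 : (i:ℝ)/(N:ℝ) ≤ 1/4 := by rw [div_le_iff₀ hNpos]; linarith
  have ht1 : ((i:ℝ)+1)/(N:ℝ) ≤ 1/4 := by rw [div_le_iff₀ hNpos]; linarith
  have ht2 : ((i:ℝ)+2)/(N:ℝ) ≤ 1/4 := by rw [div_le_iff₀ hNpos]; linarith
  have e0 : meshX β σ ε N i = -c * Real.log A := by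
    rw [meshX, hpsi _ ht0, hA]
  have e1 : meshX β σ ε N (i+1) = -c * Real.log B := by
    have hcast : ((i+1 : ℕ):ℝ) = (i:ℝ)+1 := by push_cast; ring
    rw [meshX, hcast, hpsi _ ht1, hB]
  have e2 : meshX β σ ε N (i+1+1) = -c * Real.log C := by
    have hcast : ((i+1+1 : ℕ):ℝ) = (i:ℝ)+2 := by push_cast; ring
    rw [meshX, hcast, hpsi _ ht2, hC]
  have hx0 : (0:ℝ) ≤ ((i:ℝ)+2)/(N:ℝ) := by positivity
  have hCpos : 0 < C := by
    rw [hC]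
    nlinarith [mul_le_mul_of_nonneg_left ht2 (by linarith : (0:ℝ) ≤ 1-ε)]
  have hdif : A + C = 2 * B := by
    rw [hA, hB, hC]; ring
  have hBpos : 0 < B := by
    rw [hB]
    nlinarith [mul_le_mul_of_nonneg_left ht1 (by linarith : (0:ℝ) ≤ 1-ε)]
  have hApos : 0 < A := by
    rw [hA]
    nlinarith [mul_le_mul_of_nonneg_left ht0 (by linarith : (0:ℝ) ≤ 1-ε),
      mul_nonneg (by linarith : (0:ℝ) ≤ 1-ε) (by positivity : (0:ℝ) ≤ (i:ℝ)/(N:ℝ))]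
  have hACB : A * C ≤ B * B := by nlinarith [sq_nonneg (A - C)]
  have hlog : Real.log A + Real.log C ≤ 2 * Real.log B := by
    have h1 : Real.log (A * C) ≤ Real.log (B * B) :=
      Real.log_le_log (by positivity) hACB
    rw [Real.log_mul (ne_of_gt hApos) (ne_of_gt hCpos),
        Real.log_mul (ne_of_gt hBpos) (ne_of_gt hBpos)] at h1
    linarith
  have key : 0 ≤ c * (2 * Real.log B - Real.log A - Real.log C) :=
    mul_nonneg (le_of_lt hc) (by linarith)
  simp only [meshH, e0, e1, e2]
  nlinarith [key]
end

section
/- Under Assumption 2.2, the mesh step size of the mesh generated by ψ satisfies (σ/(4β))·ε ≤ h_{N/4−2} ≤ (σ/β)·ε. -/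
lemma exp_quarter_le : Real.exp (1/4 : ℝ) ≤ 17/10 := by
  have h4 : Real.exp (1/4 : ℝ) ^ (4:ℕ) = Real.exp 1 := by
    rw [← Real.exp_nat_mul]; norm_num
  nlinarith [Real.exp_one_lt_d9, Real.exp_pos (1/4 : ℝ),
    sq_nonneg (Real.exp (1/4:ℝ) - 17/10), sq_nonneg (Real.exp (1/4:ℝ) + 17/10),
    sq_nonneg (Real.exp (1/4:ℝ))]

theorem stmt_3 (β σ ε : ℝ) (N : ℕ)
    (hβ : 0 < β) (hσ : 0 < σ) (hε0 : 0 < ε) (hε1 : ε < 1)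
    (hN4 : 4 ∣ N) (hN : max 8 (2 * Real.log (σ / β)) ≤ (N : ℝ))
    (hεN : ε ≤ min (β / (4 * σ)) 1 * (N : ℝ)⁻¹) :
    σ / (4 * β) * ε ≤ meshH β σ ε N (N / 4 - 2) ∧
    meshH β σ ε N (N / 4 - 2) ≤ σ / β * ε := by
  obtain ⟨k, rfl⟩ := hN4
  have hk8R : (8:ℝ) ≤ ((4*k : ℕ) : ℝ) := le_trans (le_max_left _ _) hN
  have hk8 : 8 ≤ 4 * k := by exact_mod_cast hk8R
  have hk2 : 2 ≤ k := by omega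
  have hkR : (2:ℝ) ≤ (k:ℝ) := by exact_mod_cast hk2
  have hkpos : (0:ℝ) < (k:ℝ) := by linarith
  have hNpos : (0:ℝ) < ((4*k : ℕ) : ℝ) := by push_cast; linarith
  have hεinv : ε ≤ ((4*k : ℕ) : ℝ)⁻¹ := by
    refine hεN.trans ?_
    have h1 : min (β / (4 * σ)) 1 ≤ 1 := min_le_right _ _
    nlinarith [inv_pos.mpr hNpos]
  have hεN1 : ε * ((4*k : ℕ) : ℝ) ≤ 1 := by
    have := mul_le_mul_of_nonneg_right hεinv (le_of_lt hNpos)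
    rwa [inv_mul_cancel₀ (ne_of_gt hNpos)] at this
  have hεk : ε * (k:ℝ) ≤ 1/4 := by
    have : ((4*k : ℕ) : ℝ) = 4 * (k:ℝ) := by push_cast; ring
    rw [this] at hεN1; linarith
  have hε8 : ε ≤ 1/8 := by nlinarith
  -- indices
  rw [show 4 * k / 4 - 2 = k - 2 from by omega]
  unfold meshH meshX
  rw [show k - 2 + 1 = k - 1 from by omega]
  have ec1 : ((k - 1 : ℕ) : ℝ) = (k:ℝ) - 1 := by
    rw [Nat.cast_sub (by omega : 1 ≤ k)]; norm_num
  have ec2 : ((k - 2 : ℕ) : ℝ) = (k:ℝ) - 2 := by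
    rw [Nat.cast_sub (by omega : 2 ≤ k)]; norm_num
  have ecN : ((4 * k : ℕ) : ℝ) = 4 * (k:ℝ) := by push_cast; ring
  rw [ec1, ec2, ecN]
  unfold psi
  rw [if_pos (show ((k:ℝ) - 1) / (4 * (k:ℝ)) ≤ 1/4 by
        rw [div_le_div_iff₀ (by linarith) (by norm_num)]; linarith),
      if_pos (show ((k:ℝ) - 2) / (4 * (k:ℝ)) ≤ 1/4 by
        rw [div_le_div_iff₀ (by linarith) (by norm_num)]; linarith)]
  set a : ℝ := ε * k + (1 - ε) with ha_def
  set b : ℝ := ε * k + 2 * (1 - ε) with hb_def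
  have ha : 0 < a := by have : 0 < ε * k := by positivity
                        simp only [ha_def]; nlinarith
  have hb : 0 < b := by have : 0 < ε * k := by positivity
                        simp only [hb_def]; nlinarith
  have hA : 1 - 4 * (1 - ε) * (((k:ℝ) - 1) / (4 * (k:ℝ))) = a / k := by
    field_simp; ring
  have hB : 1 - 4 * (1 - ε) * (((k:ℝ) - 2) / (4 * (k:ℝ))) = b / k := by
    field_simp; ring
  rw [hA, hB, Real.log_div (ne_of_gt ha) (ne_of_gt hkpos),
      Real.log_div (ne_of_gt hb) (ne_of_gt hkpos)]
  have hc : 0 < σ * ε / β := by positivity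
  have hrpos : 0 < b / a := by positivity
  have hr_lo : (17/10 : ℝ) ≤ b / a := by
    rw [le_div_iff₀ ha]; simp only [ha_def, hb_def]; linarith
  have hr_hi : b / a ≤ 2 := by
    rw [div_le_iff₀ ha]; simp only [ha_def, hb_def]; linarith [mul_pos hε0 hkpos]
  have hlog_lo : (1/4 : ℝ) ≤ Real.log (b / a) :=
    (Real.le_log_iff_exp_le hrpos).mpr (exp_quarter_le.trans hr_lo)
  have hlog_hi : Real.log (b / a) ≤ 1 := by
    rw [Real.log_le_iff_le_exp hrpos]
    linarith [Real.exp_one_gt_d9, hr_hi]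
  have hlogd : Real.log (b / a) = Real.log b - Real.log a :=
    Real.log_div (ne_of_gt hb) (ne_of_gt ha)
  have heq : σ / (4 * β) * ε = σ * ε / β * (1/4) := by field_simp
  have heq2 : σ / β * ε = σ * ε / β * 1 := by field_simp
  rw [hlogd] at hlog_lo hlog_hi
  constructor
  · have h := mul_le_mul_of_nonneg_left hlog_lo hc.le
    linarith
  · have h := mul_le_mul_of_nonneg_left hlog_hi hc.le
    linarith
end

section
/- Under Assumption 2.2, the mesh step size of the mesh generated by ψ satisfies (σ/β)·ε ≤ h_{N/4−1} ≤ (4σ/β)·N⁻¹. -/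
set_option maxHeartbeats 1000000 in
theorem stmt_4 (β σ ε : ℝ) (N : ℕ)
    (hβ : 0 < β) (hσ : 0 < σ) (hε0 : 0 < ε) (hε1 : ε < 1)
    (hN4 : 4 ∣ N) (hN : max 8 (2 * Real.log (σ / β)) ≤ (N : ℝ))
    (hεN : ε ≤ min (β / (4 * σ)) 1 * (N : ℝ)⁻¹) :
    σ / β * ε ≤ meshH β σ ε N (N / 4 - 1) ∧
    meshH β σ ε N (N / 4 - 1) ≤ 4 * σ / β * (N : ℝ)⁻¹ := by
  obtain ⟨k, hkN⟩ := hN4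
  have hN8 : (8:ℕ) ≤ N := by
    have := le_trans (le_max_left 8 (2 * Real.log (σ / β))) hN
    exact_mod_cast this
  have hk2 : 2 ≤ k := by omega
  have hdiv : N / 4 = k := by omega
  have hsub : N / 4 - 1 = k - 1 := by omega
  have hsucc : k - 1 + 1 = k := by omega
  have hk2r : (2:ℝ) ≤ (k:ℝ) := by exact_mod_cast hk2
  have hKpos : (0:ℝ) < (k:ℝ) := by linarith
  have hNr : (N:ℝ) = 4 * k := by exact_mod_cast hkN
  have hkm : ((k - 1 : ℕ) : ℝ) = (k:ℝ) - 1 := by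
    have : 1 ≤ k := by omega
    push_cast [Nat.cast_sub this]; ring
  have ht1 : (k:ℝ) / (N:ℝ) = 1/4 := by rw [hNr]; field_simp
  have ht2 : ((k - 1 : ℕ) : ℝ) / (N:ℝ) = ((k:ℝ) - 1) / (4 * (k:ℝ)) := by
    rw [hkm, hNr]
  have hc2 : ((k:ℝ) - 1) / (4 * (k:ℝ)) ≤ 1/4 := by
    rw [div_le_div_iff₀ (by linarith) (by norm_num)]; linarith
  obtain ⟨a, ha_def⟩ : ∃ a : ℝ, a = ε + (1 - ε) / (k:ℝ) := ⟨_, rfl⟩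
  have hA2 : 1 - 4 * (1 - ε) * (((k:ℝ) - 1) / (4 * (k:ℝ))) = a := by
    rw [ha_def]; field_simp; ring
  have ha : 0 < a := by
    rw [ha_def]
    have : 0 < (1 - ε) / (k:ℝ) := div_pos (by linarith) hKpos
    linarith
  have hH : meshH β σ ε N (N / 4 - 1) = (σ * ε / β) * Real.log (a / ε) := by
    simp only [meshH, meshX, hdiv, hsub, hsucc, psi, ht1, ht2, if_pos le_rfl,
      if_pos hc2, hA2]
    have h1 : 1 - 4 * (1 - ε) * (1/4 : ℝ) = ε := by ring
    rw [h1, Real.log_div ha.ne' hε0.ne']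
    ring
  -- basic bounds on ε
  have hNinv : (N:ℝ)⁻¹ = 1 / (4 * (k:ℝ)) := by rw [hNr, one_div]
  have hεN1 : ε ≤ 1 / (4 * (k:ℝ)) := by
    have h1 : min (β / (4 * σ)) 1 * (N:ℝ)⁻¹ ≤ 1 * (N:ℝ)⁻¹ :=
      mul_le_mul_of_nonneg_right (min_le_right _ _) (by positivity)
    rw [one_mul, hNinv] at h1
    have hεN' := hεN
    rw [hNinv] at hεN'
    linarith
  have hkε : (k:ℝ) * ε ≤ 1/4 := by
    have he : (k:ℝ) * (1 / (4 * (k:ℝ))) = 1/4 := by field_simp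
    nlinarith [mul_le_mul_of_nonneg_left hεN1 hKpos.le, he]
  have hε8 : ε ≤ 1/8 := by
    have : 1 / (4 * (k:ℝ)) ≤ 1/8 := by
      rw [div_le_div_iff₀ (by linarith) (by norm_num)]; linarith
    linarith
  have haε : 4 ≤ a / ε := by
    rw [le_div_iff₀ hε0, ha_def]
    have h3 : 3 * ((k:ℝ) * ε) ≤ 1 - ε := by linarith [hkε, hε8]
    have : 3 * ε ≤ (1 - ε) / (k:ℝ) := by
      rw [le_div_iff₀ hKpos]; nlinarith [h3]
    linarith
  have haεpos : 0 < a / ε := div_pos ha hε0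
  constructor
  · rw [hH]
    have hlog : 1 ≤ Real.log (a / ε) := by
      rw [Real.le_log_iff_exp_le haεpos]
      have := Real.exp_one_lt_d9
      linarith
    have hc : 0 ≤ σ * ε / β := by positivity
    calc σ / β * ε = σ * ε / β * 1 := by ring
      _ ≤ σ * ε / β * Real.log (a / ε) := mul_le_mul_of_nonneg_left hlog hc
  · rw [hH]
    have hlog : Real.log (a / ε) ≤ a / ε - 1 := Real.log_le_sub_one_of_pos haεpos
    have hc : 0 ≤ σ * ε / β := by positivity
    have h1 : (σ * ε / β) * Real.log (a / ε) ≤ (σ * ε / β) * (a / ε - 1) :=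
      mul_le_mul_of_nonneg_left hlog hc
    have h2 : (σ * ε / β) * (a / ε - 1) = σ / β * (a - ε) := by
      field_simp
    have h3 : a - ε = (1 - ε) / (k:ℝ) := by rw [ha_def]; ring
    have h4 : σ / β * ((1 - ε) / (k:ℝ)) ≤ 4 * σ / β * (N:ℝ)⁻¹ := by
      rw [hNinv]
      have hσβ : 0 < σ / β := div_pos hσ hβ
      have : (1 - ε) / (k:ℝ) ≤ 1 / (k:ℝ) := by
        rw [div_le_div_iff₀ hKpos hKpos]; nlinarith
      calc σ / β * ((1 - ε) / (k:ℝ)) ≤ σ / β * (1 / (k:ℝ)) := by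
            exact mul_le_mul_of_nonneg_left this (le_of_lt hσβ)
        _ = 4 * σ / β * (1 / (4 * (k:ℝ))) := by field_simp
    rw [h2, h3] at h1
    linarith
end

section
/- There exist constants C₆ > 0 and C₇ > 0 depending only on σ and β (independent of ε and N) such that, under Assumption 2.2, the first mesh step size of the mesh generated by ψ satisfies C₆·ε·N⁻¹ ≤ h₀ ≤ C₇·ε·N⁻¹. -/
/-! On the first subinterval `[0, 1/N] ⊆ [0, 1/4]` the mesh is logarithmic, so
`h₀ = (σε/β)·(-log(1 - u))` with `u = 4(1-ε)/N`. Since `ε ≤ 1/N ≤ 1/8`, `u` lies between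
`2/N` and `4/N ≤ 1/2`, and on `[0, 1/2]` one has `u ≤ -log(1 - u) ≤ 2u`. -/

open Real

lemma psi_of_le_quarter (β σ ε : ℝ) {t : ℝ} (ht : t ≤ 1/4) :
    psi β σ ε t = -(σ * ε / β) * log (1 - 4 * (1 - ε) * t) := if_pos ht

lemma meshH_zero_eq (β σ ε : ℝ) {N : ℕ} (hN : 4 ≤ N) :
    meshH β σ ε N 0 = σ * ε / β * -log (1 - 4 * (1 - ε) / N) := by
  have hinv : (N : ℝ)⁻¹ ≤ 1/4 := by
    rw [one_div]; exact inv_anti₀ (by norm_num) (by exact_mod_cast hN)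
  simp only [meshH, meshX, Nat.cast_zero, zero_div, zero_add, Nat.cast_one, one_div]
  rw [psi_of_le_quarter _ _ _ hinv, psi_of_le_quarter _ _ _ (by norm_num)]
  simp only [mul_zero, sub_zero, log_one, div_eq_mul_inv]
  ring

lemma le_neg_log_one_sub {u : ℝ} (hu : u < 1) : u ≤ -log (1 - u) := by
  linarith [log_le_sub_one_of_pos (sub_pos.2 hu)]

lemma neg_log_one_sub_le_two_mul {u : ℝ} (hu₀ : 0 ≤ u) (hu : u ≤ 1/2) :
    -log (1 - u) ≤ 2 * u := by
  have h1u : 0 < 1 - u := by linarith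
  have hlog := one_sub_inv_le_log_of_pos h1u
  have hinv : 1 - (1 - u)⁻¹ = -(u / (1 - u)) := by field_simp; ring
  have hdiv : u / (1 - u) ≤ 2 * u := by
    rw [div_le_iff₀ h1u]; nlinarith
  linarith

theorem stmt_5 (β σ : ℝ) (hβ : 0 < β) (hσ : 0 < σ) :
    ∃ C₆ C₇ : ℝ, 0 < C₆ ∧ 0 < C₇ ∧
      ∀ (ε : ℝ) (N : ℕ), 0 < ε → ε < 1 → 4 ∣ N →
        max 8 (2 * Real.log (σ / β)) ≤ (N : ℝ) →
        ε ≤ min (β / (4 * σ)) 1 * (N : ℝ)⁻¹ →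
        C₆ * ε * (N : ℝ)⁻¹ ≤ meshH β σ ε N 0 ∧
        meshH β σ ε N 0 ≤ C₇ * ε * (N : ℝ)⁻¹ := by
  refine ⟨2 * σ / β, 8 * σ / β, by positivity, by positivity, ?_⟩
  intro ε N hε _ _ hN hεN
  have hN8 : (8 : ℝ) ≤ N := (le_max_left _ _).trans hN
  have hN0 : (0 : ℝ) < N := by linarith
  have hεN1 : ε * N ≤ 1 := by
    have := hεN.trans (mul_le_mul_of_nonneg_right (min_le_right _ 1) (by positivity))
    rwa [one_mul, ← one_div, le_div_iff₀ hN0] at this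
  set u := 4 * (1 - ε) / N
  have hu_lo : 2 / N ≤ u := by
    rw [div_le_div_iff_of_pos_right hN0]; nlinarith
  have hu_hi : u ≤ 4 / N := by
    rw [div_le_div_iff_of_pos_right hN0]; linarith
  have hu_pos : 0 ≤ u := (by positivity : (0 : ℝ) ≤ 2 / N).trans hu_lo
  have hu_half : u ≤ 1/2 := hu_hi.trans (by rw [div_le_iff₀ hN0]; linarith)
  rw [meshH_zero_eq β σ ε (by exact_mod_cast (by linarith : (4 : ℝ) ≤ N))]
  constructor
  · calc 2 * σ / β * ε * (N : ℝ)⁻¹ = σ * ε / β * (2 / N) := by ring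
      _ ≤ σ * ε / β * -log (1 - u) := by
        gcongr; exact hu_lo.trans (le_neg_log_one_sub (by linarith))
  · calc σ * ε / β * -log (1 - u) ≤ σ * ε / β * (2 * (4 / N)) := by
          gcongr
          exact (neg_log_one_sub_le_two_mul hu_pos hu_half).trans (by linarith)
      _ = 8 * σ / β * ε * (N : ℝ)⁻¹ := by ring
end

section
/- Under Assumption 2.2, for every integer i with N/4 ≤ i ≤ 3N/4 − 1 the mesh step size of the mesh generated by ψ equals h_i = (2 − 4(σε/β)·ln(1/ε))·N⁻¹; moreover N⁻¹ ≤ h_i ≤ 2·N⁻¹ for all such i. -/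
lemma log_four_mul_le {x : ℝ} (hx : 8 ≤ x) : Real.log (4 * x) ≤ x / 2 := by
  have hx0 : (0:ℝ) < x := by linarith
  have h1 : Real.log (4 * x) = Real.log 32 + Real.log (x / 8) := by
    rw [show (4:ℝ) * x = 32 * (x / 8) by ring,
      Real.log_mul (by norm_num) (by positivity)]
  have h32 : Real.log 32 = 5 * Real.log 2 := by
    rw [show (32:ℝ) = 2 ^ 5 by norm_num, Real.log_pow]; push_cast; ring
  have h2 : Real.log (x / 8) ≤ x / 8 - 1 := Real.log_le_sub_one_of_pos (by positivity)
  have := Real.log_two_lt_d9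
  rw [h1, h32]
  nlinarith

lemma mul_log_inv_mono {a b : ℝ} (ha : 0 < a) (hab : a ≤ b) (hb : b ≤ 1/8) :
    a * Real.log (1/a) ≤ b * Real.log (1/b) := by
  have hb0 : 0 < b := lt_of_lt_of_le ha hab
  have hlb1 : 1 ≤ Real.log (1/b) := by
    have h8 : (8:ℝ) ≤ 1/b := by rw [le_div_iff₀ hb0]; linarith
    have hl : Real.log 8 ≤ Real.log (1/b) := Real.log_le_log (by norm_num) h8
    have l8 : Real.log 8 = 3 * Real.log 2 := by
      rw [show (8:ℝ) = 2 ^ 3 by norm_num, Real.log_pow]; push_cast; ring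
    have := Real.log_two_gt_d9
    linarith
  have hsplit : Real.log (1/a) = Real.log (1/b) + Real.log (b/a) := by
    rw [← Real.log_mul (by positivity) (by positivity)]
    congr 1
    field_simp
  have hba : Real.log (b/a) ≤ b/a - 1 := Real.log_le_sub_one_of_pos (by positivity)
  have key : a * Real.log (b/a) ≤ b - a := by
    have h := mul_le_mul_of_nonneg_left hba ha.le
    have h2 : a * (b/a - 1) = b - a := by field_simp
    linarith
  rw [hsplit]
  nlinarith [mul_nonneg (sub_nonneg.2 hab) (sub_nonneg.2 hlb1)]

lemma psi_mid (β σ ε : ℝ) (t : ℝ) (h1 : 1/4 ≤ t) (h2 : t ≤ 3/4) :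
    psi β σ ε t = (2 * (1 + (σ * ε / β) * Real.log ε)) * (t - 1/4)
      + ((2 * σ * ε / β) * Real.log ε) * (t - 3/4) := by
  unfold psi
  split_ifs with hA hB
  · have ht : t = 1/4 := le_antisymm hA h1
    subst ht
    rw [show (1:ℝ) - 4 * (1 - ε) * (1/4) = ε by ring]
    ring
  · rfl
  · have ht : t = 3/4 := le_antisymm h2 (not_lt.mp hB)
    subst ht
    rw [show (1:ℝ) - 4 * (1 - ε) * (1 - 3/4) = ε by ring]
    ring

lemma key_ineq (β σ ε : ℝ) (N : ℕ)
    (hβ : 0 < β) (hσ : 0 < σ) (hε0 : 0 < ε) (hε1 : ε < 1)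
    (hN : max 8 (2 * Real.log (σ / β)) ≤ (N : ℝ))
    (hεN : ε ≤ min (β / (4 * σ)) 1 * (N : ℝ)⁻¹) :
    4 * (σ * ε / β) * Real.log (1 / ε) ≤ 1 := by
  have hN8 : (8:ℝ) ≤ N := le_trans (le_max_left _ _) hN
  have hNr : (0:ℝ) < N := by linarith
  have hlogσβ : 2 * Real.log (σ / β) ≤ N := le_trans (le_max_right _ _) hN
  have hlog4N : Real.log (4 * N) ≤ (N:ℝ) / 2 := log_four_mul_le hN8
  set m : ℝ := min (β / (4 * σ)) 1 * (N : ℝ)⁻¹ with hm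
  have hm0 : 0 < m := by
    apply mul_pos _ (inv_pos.2 hNr)
    exact lt_min (by positivity) one_pos
  have hm8 : m ≤ 1/8 := by
    have h1 : min (β / (4 * σ)) 1 ≤ 1 := min_le_right _ _
    have h2 : (N:ℝ)⁻¹ ≤ 1/8 := by
      rw [inv_le_comm₀ hNr (by norm_num)]
      linarith
    calc m ≤ 1 * (N:ℝ)⁻¹ := by
            apply mul_le_mul_of_nonneg_right h1 (by positivity)
      _ ≤ 1/8 := by simpa using h2
  have hmono : ε * Real.log (1/ε) ≤ m * Real.log (1/m) := mul_log_inv_mono hε0 hεN hm8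
  have hrw : 4 * (σ * ε / β) * Real.log (1 / ε) = (4 * σ / β) * (ε * Real.log (1/ε)) := by
    ring
  rw [hrw]
  have hc0 : 0 < 4 * σ / β := by positivity
  have step1 : (4 * σ / β) * (ε * Real.log (1/ε)) ≤ (4 * σ / β) * (m * Real.log (1/m)) :=
    mul_le_mul_of_nonneg_left hmono hc0.le
  refine le_trans step1 ?_
  rcases le_or_gt (β / (4 * σ)) 1 with hc1 | hc1
  · have hmval : m = β / (4 * σ) * (N:ℝ)⁻¹ := by rw [hm, min_eq_left hc1]
    have hinv : 1 / m = (4 * (N:ℝ)) * (σ / β) := by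
      rw [hmval]; field_simp
    have hlog : Real.log (1/m) ≤ (N:ℝ) := by
      rw [hinv, Real.log_mul (by positivity) (by positivity)]
      linarith
    have hcm : (4 * σ / β) * m = (N:ℝ)⁻¹ := by
      rw [hmval]; field_simp
    calc (4 * σ / β) * (m * Real.log (1/m)) = ((4 * σ / β) * m) * Real.log (1/m) := by ring
      _ = (N:ℝ)⁻¹ * Real.log (1/m) := by rw [hcm]
      _ ≤ (N:ℝ)⁻¹ * N := by
          apply mul_le_mul_of_nonneg_left hlog (by positivity)
      _ = 1 := by field_simp
  · have hmval : m = (N:ℝ)⁻¹ := by rw [hm, min_eq_right hc1.le, one_mul]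
    have hσβ : 4 * σ / β ≤ 1 := by
      rw [div_le_one hβ]
      have := (one_lt_div (by positivity : (0:ℝ) < 4 * σ)).mp hc1
      linarith
    have hinv : 1 / m = (N:ℝ) := by rw [hmval]; field_simp
    have hlogm : Real.log (1/m) ≤ (N:ℝ) / 2 := by
      rw [hinv]
      refine le_trans (Real.log_le_log hNr (by linarith)) hlog4N
    have hlognn : 0 ≤ Real.log (1/m) := by
      rw [hinv]
      exact Real.log_nonneg (by linarith)
    calc (4 * σ / β) * (m * Real.log (1/m)) ≤ 1 * (m * Real.log (1/m)) := by
          apply mul_le_mul_of_nonneg_right hσβ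
          exact mul_nonneg hm0.le hlognn
      _ = (N:ℝ)⁻¹ * Real.log (1/m) := by rw [hmval]; ring
      _ ≤ (N:ℝ)⁻¹ * ((N:ℝ)/2) := mul_le_mul_of_nonneg_left hlogm (by positivity)
      _ ≤ 1 := by rw [inv_mul_le_iff₀ hNr]; linarith

theorem stmt_6 (β σ ε : ℝ) (N : ℕ)
    (hβ : 0 < β) (hσ : 0 < σ) (hε0 : 0 < ε) (hε1 : ε < 1)
    (hN4 : 4 ∣ N) (hN : max 8 (2 * Real.log (σ / β)) ≤ (N : ℝ))
    (hεN : ε ≤ min (β / (4 * σ)) 1 * (N : ℝ)⁻¹) :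
    ∀ i : ℕ, N / 4 ≤ i → i + 1 ≤ 3 * N / 4 →
      meshH β σ ε N i = (2 - 4 * (σ * ε / β) * Real.log (1 / ε)) * (N : ℝ)⁻¹ ∧
      (N : ℝ)⁻¹ ≤ meshH β σ ε N i ∧ meshH β σ ε N i ≤ 2 * (N : ℝ)⁻¹ := by
  intro i hi1 hi2
  obtain ⟨k, hk⟩ := hN4
  have hN8r : (8:ℝ) ≤ N := le_trans (le_max_left _ _) hN
  have hN8 : 8 ≤ N := by exact_mod_cast hN8r
  have hNr : (0:ℝ) < N := by linarith
  have hNne : (N:ℝ) ≠ 0 := ne_of_gt hNr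
  have hki : k ≤ i := by omega
  have hik : i + 1 ≤ 3 * k := by omega
  have hkN : (N:ℝ) = 4 * k := by exact_mod_cast hk
  have hkir : (k:ℝ) ≤ i := by exact_mod_cast hki
  have hikr : (i:ℝ) + 1 ≤ 3 * k := by exact_mod_cast hik
  have h1 : 1/4 ≤ (i:ℝ)/N := by
    rw [le_div_iff₀ hNr]; rw [hkN] at *; linarith
  have h2 : (i:ℝ)/N ≤ 3/4 := by
    rw [div_le_iff₀ hNr]; rw [hkN] at *; linarith
  have h3 : 1/4 ≤ ((i:ℝ)+1)/N := by
    rw [le_div_iff₀ hNr]; rw [hkN] at *; linarith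
  have h4 : ((i:ℝ)+1)/N ≤ 3/4 := by
    rw [div_le_iff₀ hNr]; rw [hkN] at *; linarith
  have e1 := psi_mid β σ ε ((i:ℝ)/N) h1 h2
  have e2 := psi_mid β σ ε (((i:ℝ)+1)/N) h3 h4
  have hmesh : meshH β σ ε N i = (2 - 4 * (σ * ε / β) * Real.log (1 / ε)) * (N : ℝ)⁻¹ := by
    unfold meshH meshX
    push_cast
    rw [e2, e1, show Real.log (1/ε) = - Real.log ε by rw [one_div, Real.log_inv]]
    field_simp
    ring
  refine ⟨hmesh, ?_, ?_⟩
  · rw [hmesh]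
    have hkey := key_ineq β σ ε N hβ hσ hε0 hε1 hN hεN
    have hNi : 0 < (N:ℝ)⁻¹ := by positivity
    nlinarith
  · rw [hmesh]
    have hlognn : 0 ≤ Real.log (1/ε) := by
      apply Real.log_nonneg
      rw [le_div_iff₀ hε0]; linarith
    have hc : 0 ≤ 4 * (σ * ε / β) * Real.log (1/ε) :=
      mul_nonneg (by positivity) hlognn
    have hNi : 0 < (N:ℝ)⁻¹ := by positivity
    nlinarith
end

section
/- There exists a constant C > 0 depending only on β (independent of ε, N and σ) such that, under Assumption 2.2, the mesh point x_{N/4−1} of the mesh generated by ψ satisfies x_{N/4−1} ≥ C·σ·ε·ln N. -/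
theorem stmt_8 (β : ℝ) (hβ : 0 < β) :
    ∃ C : ℝ, 0 < C ∧
      ∀ (σ ε : ℝ) (N : ℕ), 0 < σ → 0 < ε → ε < 1 → 4 ∣ N →
        max 8 (2 * Real.log (σ / β)) ≤ (N : ℝ) →
        ε ≤ min (β / (4 * σ)) 1 * (N : ℝ)⁻¹ →
        C * σ * ε * Real.log N ≤ meshX β σ ε N (N / 4 - 1) := by
  refine ⟨1 / (5 * β), by positivity, ?_⟩
  intro σ ε N hσ hε0 hε1 hdvd hNmax hεN
  obtain ⟨k, rfl⟩ := hdvd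
  have h8 : (8 : ℝ) ≤ ((4 * k : ℕ) : ℝ) := le_trans (le_max_left _ _) hNmax
  have hKcast : ((4 * k : ℕ) : ℝ) = 4 * (k : ℝ) := by push_cast; ring
  set K : ℝ := (k : ℝ) with hK
  have hK2 : (2 : ℝ) ≤ K := by
    rw [hKcast] at h8; linarith
  have hKpos : 0 < K := by linarith
  have hk1 : 1 ≤ k := by
    have h8n : 8 ≤ 4 * k := by exact_mod_cast h8
    omega
  have hdiv : 4 * k / 4 = k := Nat.mul_div_cancel_left k (by norm_num)
  have hidx : (((4 * k / 4 - 1 : ℕ)) : ℝ) = K - 1 := by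
    rw [hdiv, Nat.cast_sub hk1]; push_cast; ring
  have ht : ((4 * k / 4 - 1 : ℕ) : ℝ) / ((4 * k : ℕ) : ℝ) = (K - 1) / (4 * K) := by
    rw [hidx, hKcast]
  have htle : (K - 1) / (4 * K) ≤ 1 / 4 := by
    rw [div_le_div_iff₀ (by linarith) (by norm_num)]; linarith
  have hAeq : 1 - 4 * (1 - ε) * ((K - 1) / (4 * K)) = ε + (1 - ε) / K := by
    field_simp; ring
  have hεle : ε ≤ 1 / (4 * K) := by
    have h1 : min (β / (4 * σ)) 1 ≤ 1 := min_le_right _ _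
    have h2 : (0:ℝ) < ((4 * k : ℕ) : ℝ) := by linarith
    calc ε ≤ min (β / (4 * σ)) 1 * ((4 * k : ℕ) : ℝ)⁻¹ := hεN
      _ ≤ 1 * ((4 * k : ℕ) : ℝ)⁻¹ := by
          exact mul_le_mul_of_nonneg_right h1 (inv_nonneg.2 h2.le)
      _ = 1 / (4 * K) := by rw [one_mul, hKcast, one_div]
  have hApos : 0 < ε + (1 - ε) / K := by
    have : 0 ≤ (1 - ε) / K := div_nonneg (by linarith) hKpos.le
    linarith
  have hAle : ε + (1 - ε) / K ≤ 5 / (4 * K) := by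
    have h1 : (1 - ε) / K ≤ 1 / K := by
      gcongr
      linarith
    have h2 : (1 : ℝ) / K = 4 / (4 * K) := by field_simp
    rw [h2] at h1
    have : (1:ℝ) / (4*K) + 4 / (4*K) = 5 / (4*K) := by ring
    linarith
  have hlogN8 : Real.log 8 ≤ Real.log (4 * K) := by
    apply Real.log_le_log (by norm_num); linarith
  have hlogNpos : 0 < Real.log (4 * K) := by
    have : (0:ℝ) < Real.log 8 := Real.log_pos (by norm_num)
    linarith
  have hlogA : Real.log (ε + (1 - ε) / K) ≤ Real.log 5 - Real.log (4 * K) := by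
    calc Real.log (ε + (1 - ε) / K) ≤ Real.log (5 / (4 * K)) :=
          Real.log_le_log hApos hAle
      _ = Real.log 5 - Real.log (4 * K) := by
          rw [Real.log_div (by norm_num) (by linarith)]
  have hnum : 5 * Real.log 5 ≤ 4 * Real.log 8 := by
    have h := Real.log_le_log (x := (5:ℝ)^5) (by norm_num) (by norm_num : (5:ℝ)^5 ≤ (8:ℝ)^4)
    rwa [Real.log_pow, Real.log_pow] at h
    
  have hkey : Real.log (4 * K) / 5 ≤ Real.log (4 * K) - Real.log 5 := by
    nlinarith [hlogN8]
  -- unfold mesh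
  rw [meshX, psi, ht, if_pos htle, hAeq, hKcast]
  have hfac : (0:ℝ) ≤ σ * ε / β := by positivity
  have hchain : Real.log (4 * K) / 5 ≤ -Real.log (ε + (1 - ε) / K) := by linarith
  calc 1 / (5 * β) * σ * ε * Real.log (4 * K)
      = σ * ε / β * (Real.log (4 * K) / 5) := by ring
    _ ≤ σ * ε / β * (-Real.log (ε + (1 - ε) / K)) :=
        mul_le_mul_of_nonneg_left hchain hfac
    _ = -(σ * ε / β) * Real.log (ε + (1 - ε) / K) := by ring
end

section
/- There exists a constant C > 0 depending only on σ and β (independent of ε and N) such that, under Assumption 2.2, for every real μ with 0 ≤ μ ≤ σ and every integer i with 0 ≤ i ≤ N/4 − 2, the mesh generated by ψ satisfies h_i^μ · e^{−β x_i/ε} ≤ C·ε^μ·N^{−μ}. -/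
theorem stmt_9 (β σ : ℝ) (hβ : 0 < β) (hσ : 0 < σ) :
    ∃ C : ℝ, 0 < C ∧
      ∀ (ε : ℝ) (N : ℕ), 0 < ε → ε < 1 → 4 ∣ N →
        max 8 (2 * Real.log (σ / β)) ≤ (N : ℝ) →
        ε ≤ min (β / (4 * σ)) 1 * (N : ℝ)⁻¹ →
        ∀ μ : ℝ, 0 ≤ μ → μ ≤ σ → ∀ i : ℕ, i + 2 ≤ N / 4 →
          meshH β σ ε N i ^ μ * Real.exp (-(β * meshX β σ ε N i) / ε) ≤
            C * ε ^ μ * (N : ℝ) ^ (-μ) := by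
  have hK0 : 0 < 8 * σ / β := by positivity
  refine ⟨(max 1 (8 * σ / β)) ^ σ, Real.rpow_pos_of_pos (lt_of_lt_of_le one_pos (le_max_left _ _)) σ, ?_⟩
  intro ε N hε hε1 _hdvd hNmax _hεN μ hμ0 hμσ i hi
  have hNr : (8 : ℝ) ≤ (N : ℝ) := le_trans (le_max_left _ _) hNmax
  have hNpos : (0 : ℝ) < (N : ℝ) := by linarith
  have hi' : 4 * (i + 2) ≤ N := by
    have := (Nat.le_div_iff_mul_le (by norm_num : 0 < 4)).mp hi
    omega
  have hi4 : 4 * ((i : ℝ) + 2) ≤ (N : ℝ) := by exact_mod_cast hi'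
  have hipos : (0 : ℝ) ≤ (i : ℝ) := Nat.cast_nonneg i
  set u : ℝ := 1 - 4 * (1 - ε) * ((i : ℝ) / N) with hu
  set v : ℝ := 1 - 4 * (1 - ε) * (((i : ℝ) + 1) / N) with hv
  clear_value u v
  have hε1' : (0 : ℝ) ≤ 1 - ε := by linarith
  have hv4 : 4 / (N : ℝ) ≤ v := by
    have h1 : 4 * (1 - ε) * ((i : ℝ) + 1) ≤ (N : ℝ) - 4 := by nlinarith
    have h2 : 4 * (1 - ε) * (((i : ℝ) + 1) / N) ≤ ((N : ℝ) - 4) / N := by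
      calc 4 * (1 - ε) * (((i : ℝ) + 1) / N) = (4 * (1 - ε) * ((i : ℝ) + 1)) / N := by ring
        _ ≤ ((N : ℝ) - 4) / N := by gcongr
    have h3 : ((N : ℝ) - 4) / N = 1 - 4 / N := by field_simp
    rw [hv]; linarith
  have hv0 : 0 < v := lt_of_lt_of_le (by positivity) hv4
  have huv : u - v = 4 * (1 - ε) / N := by rw [hu, hv]; ring
  have hvu : v ≤ u := by
    have : 0 ≤ u - v := by rw [huv]; positivity
    linarith
  have hu0 : 0 < u := lt_of_lt_of_le hv0 hvu
  have hu1 : u ≤ 1 := by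
    have : 0 ≤ 4 * (1 - ε) * ((i : ℝ) / N) := by positivity
    rw [hu]; linarith
  have hu2v : u ≤ 2 * v := by
    have h4N : 4 / (N : ℝ) ≤ v := hv4
    have h5 : u - v ≤ 4 / N := by
      rw [huv]
      gcongr
      linarith
    linarith
  -- unfold mesh points
  have hcond : ((i : ℝ) + 1) / N ≤ 1 / 4 := by
    rw [div_le_div_iff₀ hNpos (by norm_num)]
    linarith
  have hcondi : (i : ℝ) / N ≤ 1 / 4 := by
    rw [div_le_div_iff₀ hNpos (by norm_num)]
    linarith
  have hxi : meshX β σ ε N i = -(σ * ε / β) * Real.log u := by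
    rw [meshX, psi, if_pos hcondi, ← hu]
  have hxi1 : meshX β σ ε N (i + 1) = -(σ * ε / β) * Real.log v := by
    rw [meshX, psi]
    push_cast
    rw [if_pos hcond, ← hv]
  have hH : meshH β σ ε N i = (σ * ε / β) * (Real.log u - Real.log v) := by
    rw [meshH, hxi, hxi1]; ring
  have hH0 : 0 ≤ meshH β σ ε N i := by
    rw [hH]
    have := Real.log_le_log hv0 hvu
    have hs : 0 ≤ σ * ε / β := by positivity
    nlinarith
  -- upper bound for h_i
  have hlog : Real.log u - Real.log v ≤ (u - v) / v := by
    have h1 := Real.log_le_sub_one_of_pos (div_pos hu0 hv0)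
    rw [Real.log_div hu0.ne' hv0.ne'] at h1
    have : u / v - 1 = (u - v) / v := by field_simp
    linarith
  have hkey : (u - v) / v ≤ 8 / (N * u) := by
    rw [huv, div_div, div_le_div_iff₀ (by positivity) (by positivity)]
    have h2 : (1 - ε) * u ≤ 2 * v := by nlinarith
    have h3 := mul_le_mul_of_nonneg_left h2 (show (0:ℝ) ≤ 4 * (N:ℝ) by positivity)
    linear_combination h3
  have hHb : meshH β σ ε N i ≤ 8 * σ / β * ε / (N * u) := by
    rw [hH]
    have hs : 0 ≤ σ * ε / β := by positivity
    have := mul_le_mul_of_nonneg_left (le_trans hlog hkey) hs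
    calc (σ * ε / β) * (Real.log u - Real.log v) ≤ (σ * ε / β) * (8 / (N * u)) := this
      _ = 8 * σ / β * ε / (N * u) := by ring
  -- exponential term
  have hexp : Real.exp (-(β * meshX β σ ε N i) / ε) = u ^ σ := by
    rw [hxi]
    have harg : -(β * (-(σ * ε / β) * Real.log u)) / ε = Real.log u * σ := by
      field_simp
    rw [harg, Real.rpow_def_of_pos hu0]
  -- assembling
  have hKu : (0 : ℝ) ≤ 8 * σ / β * ε / (N * u) := by positivity
  have hsplit : (8 * σ / β * ε / (N * u)) ^ μ = (8 * σ / β) ^ μ * ε ^ μ * (N : ℝ) ^ (-μ) * u ^ (-μ) := by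
    rw [div_eq_mul_inv, mul_inv, Real.mul_rpow (by positivity) (by positivity),
      Real.mul_rpow (by positivity) (by positivity),
      Real.mul_rpow (by positivity) (by positivity),
      Real.inv_rpow hNpos.le, Real.inv_rpow hu0.le,
      ← Real.rpow_neg hNpos.le, ← Real.rpow_neg hu0.le]
    ring
  calc meshH β σ ε N i ^ μ * Real.exp (-(β * meshX β σ ε N i) / ε)
      = meshH β σ ε N i ^ μ * u ^ σ := by rw [hexp]
    _ ≤ (8 * σ / β * ε / (N * u)) ^ μ * u ^ σ := by
        exact mul_le_mul_of_nonneg_right (Real.rpow_le_rpow hH0 hHb hμ0)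
          (Real.rpow_nonneg hu0.le σ)
    _ = (8 * σ / β) ^ μ * ε ^ μ * (N : ℝ) ^ (-μ) * (u ^ (-μ) * u ^ σ) := by rw [hsplit]; ring
    _ = (8 * σ / β) ^ μ * ε ^ μ * (N : ℝ) ^ (-μ) * u ^ (σ - μ) := by
        rw [← Real.rpow_add hu0, neg_add_eq_sub]
    _ ≤ (8 * σ / β) ^ μ * ε ^ μ * (N : ℝ) ^ (-μ) * 1 := by
        apply mul_le_mul_of_nonneg_left (Real.rpow_le_one hu0.le hu1 (by linarith))
        positivity
    _ ≤ (max 1 (8 * σ / β)) ^ σ * ε ^ μ * (N : ℝ) ^ (-μ) := by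
        rw [mul_one]
        have h1 : (8 * σ / β) ^ μ ≤ (max 1 (8 * σ / β)) ^ μ := Real.rpow_le_rpow hK0.le (le_max_right _ _) hμ0
        have h2 : (max 1 (8 * σ / β)) ^ μ ≤ (max 1 (8 * σ / β)) ^ σ :=
          Real.rpow_le_rpow_of_exponent_le (le_max_left _ _) hμσ
        have hεμ : (0:ℝ) ≤ ε ^ μ := Real.rpow_nonneg hε.le μ
        have hNμ : (0:ℝ) ≤ (N : ℝ) ^ (-μ) := Real.rpow_nonneg hNpos.le _
        exact mul_le_mul_of_nonneg_right
          (mul_le_mul_of_nonneg_right (le_trans h1 h2) hεμ) hNμ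
end
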